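/- Let (Ω, ℱ, P) be a probability space, let N ≥ 1, let A₁, …, A_N be events, and let L ≥ 2 be an integer. Let φ⋆ ≥ 0 and suppose that for every k with 1 ≤ k and k + L + 1 ≤ N, every event C in σ(A₁, …, A_k) with P(C) > 0, and every event B in σ(A_{k+L+1}, …, A_N), one has |P(B ∣ C) − P(B)| ≤ φ⋆. Set S_N := ∑_{k=1}^N P(A_k), T^w_{L−1} := ∑_{1≤i<k≤N, k−i ≤ L−1} ((L − (k−i))/L)·P(A_i ∩ A_k), and κ_{N,L} := ⌈N/L⌉ + 1. Then P(⋃_{k=1}^N A_k) ≥ 1 − exp(−(1/2)(S_N − T^w_{L−1} − κ_{N,L}·φ⋆)₊). -/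

import Mathlib

/-!
Fix a shift `s < L` and cut `1, …, N` into at most `⌈N/L⌉ + 1` consecutive blocks of
length `L`. By the second Bonferroni inequality the union `D_j` of the events of block `j`
has probability at least the block sum minus the overlaps of pairs inside the block. Two
blocks of the same parity are separated by a whole block, that is by `L` indices, so the
mixing hypothesis gives `P(D_aᶜ ∣ ⋂_{j < a} D_jᶜ) ≤ 1 - P(D_a) + φ` along the even blocks and
along the odd blocks; with `1 + x ≤ eˣ` this bounds `P(⋂ₖ A_kᶜ)` by two exponentials, hence
by their geometric mean, which involves all blocks. A pair at distance `d` lies in a common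
block for at most `L - d` of the `L` shifts, so on average over the shifts the within-block
overlap is at most `T^w_{L-1}`, and some shift does at least as well as the average.
-/

open MeasureTheory Finset Real

theorem Finset.sum_fiberwise_sum_fiberwise_of_maps_to {ι κ M : Type*} [DecidableEq κ]
    [AddCommMonoid M] {s : Finset ι} {t : Finset κ} {g : ι → κ} (h : ∀ i ∈ s, g i ∈ t)
    (f : ι → ι → M) :
    ∑ j ∈ t, ∑ i ∈ s with g i = j, ∑ k ∈ s with g k = j, f i k =
      ∑ i ∈ s, ∑ k ∈ s with g k = g i, f i k := by
  rw [← sum_fiberwise_of_maps_to h fun i => ∑ k ∈ s with g k = g i, f i k]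
  refine sum_congr rfl fun j _ => sum_congr rfl fun i hi => ?_
  rw [(mem_filter.1 hi).2]

theorem Real.le_exp_half_sum_of_le_exp_filter {ι : Type*} {x : ℝ} {s : Finset ι}
    {f : ι → ℝ} (p : ι → Prop) [DecidablePred p] (h₁ : x ≤ exp (∑ i ∈ s with p i, f i))
    (h₂ : x ≤ exp (∑ i ∈ s with ¬p i, f i)) :
    x ≤ exp ((∑ i ∈ s, f i) / 2) := by
  rw [← sum_filter_add_sum_filter_not s p]
  rcases le_total (∑ i ∈ s with p i, f i) (∑ i ∈ s with ¬p i, f i) with h | h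
  · exact h₁.trans (exp_le_exp.2 (by linarith))
  · exact h₂.trans (exp_le_exp.2 (by linarith))

theorem Real.le_exp_mul_max_zero {t c y : ℝ} (h₁ : t ≤ 1) (h : t ≤ exp (c * y)) :
    t ≤ exp (c * max y 0) := by
  rcases le_total y 0 with hy | hy
  · simpa [max_eq_right hy] using h₁
  · rwa [max_eq_left hy]

namespace MeasureTheory

variable {Ω ι : Type*} [MeasurableSpace Ω] [LinearOrder ι]

noncomputable def pairOverlap (μ : Measure Ω) (A : ι → Set Ω) (F : Finset ι) : ℝ :=
  ∑ i ∈ F, ∑ k ∈ F with i < k, μ.real (A i ∩ A k)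

theorem pairOverlap_insert_of_lt (μ : Measure Ω) (A : ι → Set Ω) {a : ι} {F : Finset ι}
    (ha : ∀ i ∈ F, i < a) :
    pairOverlap μ A (insert a F) = pairOverlap μ A F + ∑ i ∈ F, μ.real (A i ∩ A a) := by
  have haF : a ∉ F := fun h => lt_irrefl a (ha a h)
  have hnone : ({k ∈ insert a F | a < k} : Finset ι) = ∅ :=
    filter_eq_empty_iff.2 fun k hk hak => by
      rcases mem_insert.1 hk with rfl | hk
      exacts [lt_irrefl _ hak, lt_asymm hak (ha k hk)]
  rw [pairOverlap, sum_insert haF, hnone, sum_empty, zero_add, pairOverlap, ← sum_add_distrib]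
  refine sum_congr rfl fun i hi => ?_
  rw [filter_insert, if_pos (ha i hi), sum_insert fun h => haF (mem_filter.1 h).1, add_comm]

theorem sum_measureReal_sub_pairOverlap_le (μ : Measure Ω) [IsFiniteMeasure μ]
    {A : ι → Set Ω} {F : Finset ι} (hA : ∀ k ∈ F, MeasurableSet (A k)) :
    ∑ k ∈ F, μ.real (A k) - pairOverlap μ A F ≤ μ.real (⋃ k ∈ F, A k) := by
  induction F using Finset.induction_on_max with
  | empty => simp [pairOverlap]
  | insert a F ha ih =>
    have hAF : ∀ k ∈ F, MeasurableSet (A k) := fun k hk => hA k (mem_insert_of_mem hk)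
    have hcap : μ.real (A a ∩ ⋃ k ∈ F, A k) ≤ ∑ i ∈ F, μ.real (A i ∩ A a) := by
      rw [Set.inter_iUnion₂]
      exact (measureReal_biUnion_finset_le _ _).trans_eq
        (sum_congr rfl fun i _ => by rw [Set.inter_comm])
    have hunion := measureReal_union_add_inter (μ := μ) (s := A a) (F.measurableSet_biUnion hAF)
      (measure_ne_top _ _) (measure_ne_top _ _)
    rw [sum_insert fun h => lt_irrefl a (ha a h), Finset.set_biUnion_insert,
      pairOverlap_insert_of_lt μ A ha]
    linarith [ih hAF]

theorem measureReal_compl_inter_le_of_abs_sub_le {μ : Measure Ω} [IsFiniteMeasure μ]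
    {B C : Set Ω} (hB : MeasurableSet B) {φ : ℝ}
    (h : 0 < μ C → |μ.real (B ∩ C) / μ.real C - μ.real B| ≤ φ) :
    μ.real (Bᶜ ∩ C) ≤ (1 - μ.real B + φ) * μ.real C := by
  have hdiff : μ.real (Bᶜ ∩ C) = μ.real C - μ.real (B ∩ C) := by
    rw [Set.inter_comm, ← Set.sdiff_eq, Set.inter_comm]
    linarith [measureReal_sdiff_add_inter (μ := μ) (s := C) hB]
  rcases eq_zero_or_pos (μ C) with h0 | hpos
  · have hC : μ.real C = 0 := by simp [Measure.real, h0]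
    have : μ.real (Bᶜ ∩ C) ≤ μ.real C := measureReal_mono Set.inter_subset_right
    rw [hC] at this ⊢
    linarith
  · have hC : 0 < μ.real C := ENNReal.toReal_pos hpos.ne' (measure_ne_top _ _)
    have hcond := (abs_le.1 (h hpos)).1
    rw [le_sub_iff_add_le, le_div_iff₀ hC] at hcond
    rw [hdiff]
    nlinarith

theorem measureReal_biInter_compl_le_exp_sum {P : Measure Ω} [IsProbabilityMeasure P]
    {E : ι → Set Ω} {φ : ℝ} (hφ : 0 ≤ φ) (F : Finset ι)
    (hstep : ∀ a ∈ F, P.real ((E a)ᶜ ∩ ⋂ j ∈ F.filter (· < a), (E j)ᶜ) ≤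
      (1 - P.real (E a) + φ) * P.real (⋂ j ∈ F.filter (· < a), (E j)ᶜ)) :
    P.real (⋂ j ∈ F, (E j)ᶜ) ≤ exp (∑ j ∈ F, (φ - P.real (E j))) := by
  induction F using Finset.induction_on_max with
  | empty => simp
  | insert a F ha ih =>
    have hbelow : F.filter (· < a) = F := filter_true_of_mem ha
    have ih' := ih fun b hb => by
      have hF : (insert a F).filter (· < b) = F.filter (· < b) := by
        rw [filter_insert, if_neg (lt_asymm (ha b hb))]
      simpa only [hF] using hstep b (mem_insert_of_mem hb)
    have hfactor : 0 ≤ 1 - P.real (E a) + φ := by linarith [measureReal_le_one (μ := P) (s := E a)]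
    have ha' := hstep a (mem_insert_self a F)
    rw [filter_insert, if_neg (lt_irrefl a), hbelow] at ha'
    rw [Finset.set_biInter_insert, sum_insert fun h => lt_irrefl a (ha a h), exp_add]
    calc P.real ((E a)ᶜ ∩ ⋂ j ∈ F, (E j)ᶜ)
        ≤ (1 - P.real (E a) + φ) * P.real (⋂ j ∈ F, (E j)ᶜ) := ha'
      _ ≤ exp (φ - P.real (E a)) * exp (∑ j ∈ F, (φ - P.real (E j))) := by
        gcongr
        linarith [add_one_le_exp (φ - P.real (E a))]

end MeasureTheory

namespace ProbabilityTheory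

open MeasurableSpace

variable {Ω : Type*} [MeasurableSpace Ω]

def RestrictedPhiMixing (P : Measure Ω) (A : ℕ → Set Ω) (N L : ℕ) (φ : ℝ) : Prop :=
  ∀ k, 1 ≤ k → k + L + 1 ≤ N →
    ∀ C : Set Ω, MeasurableSet[generateFrom (A '' Set.Icc 1 k)] C → 0 < P C →
    ∀ B : Set Ω, MeasurableSet[generateFrom (A '' Set.Icc (k + L + 1) N)] B →
      |P.real (B ∩ C) / P.real C - P.real B| ≤ φ

theorem RestrictedPhiMixing.abs_sub_le {P : Measure Ω} [IsProbabilityMeasure P] {A : ℕ → Set Ω}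
    {N L : ℕ} {φ : ℝ} (h : RestrictedPhiMixing P A N L φ) (hφ : 0 ≤ φ) {e : ℕ} (he : 1 ≤ e)
    {B C : Set Ω} (hC : MeasurableSet[generateFrom (A '' Set.Icc 1 e)] C) (hPC : 0 < P C)
    (hB : MeasurableSet[generateFrom (A '' Set.Icc (e + L + 1) N)] B) :
    |P.real (B ∩ C) / P.real C - P.real B| ≤ φ := by
  rcases le_or_gt (e + L + 1) N with heN | heN
  · exact h e he heN C hC hPC B hB
  · rw [Set.Icc_eq_empty (by omega), Set.image_empty, generateFrom_empty,
      measurableSet_bot_iff] at hB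
    have hC0 : P.real C ≠ 0 := (ENNReal.toReal_pos hPC.ne' (measure_ne_top _ _)).ne'
    rcases hB with rfl | rfl <;> simp [hC0, hφ]

end ProbabilityTheory

namespace PhiMixing

/-- Block `j` is `{L * j + 1 - s, …, L * j + L - s} ∩ [1, N]`. -/
def shiftedBlock (N L s j : ℕ) : Finset ℕ := {k ∈ Icc 1 N | (k + s - 1) / L = j}

theorem exists_separating_index {N L s a : ℕ} (hs : s < L) (ha : 2 ≤ a) :
    ∃ e, 1 ≤ e ∧ (∀ j, j + 2 ≤ a → ∀ k ∈ shiftedBlock N L s j, k ≤ e) ∧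
      ∀ k ∈ shiftedBlock N L s a, e + L + 1 ≤ k := by
  have hL : 0 < L := by omega
  have hLa : L * a = L * (a - 1) + L := by rw [← Nat.mul_succ]; congr 1; omega
  have hLa1 : L ≤ L * (a - 1) := Nat.le_mul_of_pos_right L (by omega)
  refine ⟨L * (a - 1) - s, by omega, fun j hj k hk => ?_, fun k hk => ?_⟩
  · obtain ⟨hkI, rfl⟩ := mem_filter.1 hk
    have := (Nat.div_lt_iff_lt_mul hL).1 (show (k + s - 1) / L < a - 1 by omega)
    rw [mul_comm] at this
    have := (mem_Icc.1 hkI).1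
    omega
  · obtain ⟨-, rfl⟩ := mem_filter.1 hk
    have := Nat.div_mul_le_self (k + s - 1) L
    rw [mul_comm] at this
    omega

theorem card_filter_div_eq_div_add_le (m d : ℕ) {L : ℕ} (hL : 0 < L) :
    #{s ∈ range L | (m + s) / L = (m + s + d) / L} ≤ L - d := by
  set S : Finset ℕ := {s ∈ range L | (m + s) / L = (m + s + d) / L}
  have hmaps : ∀ s ∈ S, (m + s) % L ∈ range (L - d) := by
    intro s hs
    have hdiv := (mem_filter.1 hs).2
    have h1 := Nat.div_add_mod (m + s) L
    have h2 := Nat.div_add_mod (m + s + d) L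
    have h3 := Nat.mod_lt (m + s + d) hL
    rw [← hdiv] at h2
    exact mem_range.2 (by omega)
  have hinj : Set.InjOn (fun s => (m + s) % L) S := by
    intro s hs t ht hst
    have hs' := mem_range.1 (mem_filter.1 hs).1
    have ht' := mem_range.1 (mem_filter.1 ht).1
    have := Nat.ModEq.add_left_cancel' m hst
    rwa [Nat.ModEq, Nat.mod_eq_of_lt hs', Nat.mod_eq_of_lt ht'] at this
  simpa using card_le_card_of_injOn _ hmaps hinj

theorem div_lt_ceil_add_one {N L s k : ℕ} (hL : 0 < L) (hs : s < L) (hk : k ≤ N) :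
    (k + s - 1) / L < ⌈(N : ℝ) / L⌉₊ + 1 := by
  have hN : N ≤ ⌈(N : ℝ) / L⌉₊ * L := by
    have := Nat.le_ceil ((N : ℝ) / L)
    rw [div_le_iff₀ (by exact_mod_cast hL)] at this
    exact_mod_cast this
  rw [Nat.div_lt_iff_lt_mul hL, add_one_mul]
  omega

theorem card_shifts_same_block_le {L i k : ℕ} (hL : 0 < L) (hi : 1 ≤ i) (hik : i ≤ k) :
    #{s ∈ range L | (k + s - 1) / L = (i + s - 1) / L} ≤ L - (k - i) := by
  refine le_of_eq_of_le (congrArg card (filter_congr fun s _ => ?_))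
    (card_filter_div_eq_div_add_le (i - 1) (k - i) hL)
  rw [show k + s - 1 = i - 1 + s + (k - i) by omega, show i + s - 1 = i - 1 + s by omega, eq_comm]

/-- This is `κ_{N,L}`: for every shift `s < L` only the blocks `j < κ_{N,L}` are nonempty. -/
noncomputable def numBlocks (N L : ℕ) : ℕ := ⌈(N : ℝ) / L⌉₊ + 1

theorem shiftedBlock_subset {N L s : ℕ} (j : ℕ) : shiftedBlock N L s j ⊆ Icc 1 N :=
  filter_subset _ _

theorem div_mem_range_numBlocks {N L s k : ℕ} (hL : 0 < L) (hs : s < L) (hk : k ∈ Icc 1 N) :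
    (k + s - 1) / L ∈ range (numBlocks N L) :=
  mem_range.2 (div_lt_ceil_add_one hL hs (mem_Icc.1 hk).2)

open ProbabilityTheory MeasurableSpace

variable {Ω : Type*} [MeasurableSpace Ω] {P : Measure Ω} {A : ℕ → Set Ω} {N L s : ℕ} {φ : ℝ}

noncomputable def sameBlockOverlap (P : Measure Ω) (A : ℕ → Set Ω) (N L s : ℕ) : ℝ :=
  ∑ j ∈ range (numBlocks N L), pairOverlap P A (shiftedBlock N L s j)

/-- This is `T^w_{L-1}`. -/
noncomputable def weightedOverlap (P : Measure Ω) (A : ℕ → Set Ω) (N L : ℕ) : ℝ :=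
  ∑ p ∈ (Icc 1 N ×ˢ Icc 1 N).filter (fun p => p.1 < p.2 ∧ p.2 - p.1 ≤ L - 1),
    (((L - (p.2 - p.1) : ℕ) : ℝ) / L) * P.real (A p.1 ∩ A p.2)

theorem measureReal_biInter_compl_shiftedBlock_le [IsProbabilityMeasure P]
    (hA : ∀ k ∈ Icc 1 N, MeasurableSet (A k)) (hmix : RestrictedPhiMixing P A N L φ)
    (hφ : 0 ≤ φ) (hs : s < L) {F : Finset ℕ}
    (hF : ∀ j ∈ F, ∀ a ∈ F, j < a → j + 2 ≤ a) :
    P.real (⋂ j ∈ F, (⋃ k ∈ shiftedBlock N L s j, A k)ᶜ) ≤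
      exp (∑ j ∈ F, (φ - P.real (⋃ k ∈ shiftedBlock N L s j, A k))) := by
  refine measureReal_biInter_compl_le_exp_sum hφ F fun a ha => ?_
  refine measureReal_compl_inter_le_of_abs_sub_le
    (Finset.measurableSet_biUnion _ fun k hk => hA k (shiftedBlock_subset a hk)) fun hPC => ?_
  by_cases h2 : 2 ≤ a
  · obtain ⟨e, he, hpast, hfuture⟩ := exists_separating_index (N := N) hs h2
    refine hmix.abs_sub_le hφ he ?_ hPC ?_
    · refine Finset.measurableSet_biInter _ fun j hj => (Finset.measurableSet_biUnion _ fun k hk =>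
        measurableSet_generateFrom (Set.mem_image_of_mem A ?_)).compl
      obtain ⟨hjF, hja⟩ := mem_filter.1 hj
      exact ⟨(mem_Icc.1 (shiftedBlock_subset j hk)).1, hpast j (hF j hjF a ha hja) k hk⟩
    · exact Finset.measurableSet_biUnion _ fun k hk => measurableSet_generateFrom
        (Set.mem_image_of_mem A ⟨hfuture k hk, (mem_Icc.1 (shiftedBlock_subset a hk)).2⟩)
  · have hnone : F.filter (· < a) = ∅ :=
      filter_eq_empty_iff.2 fun j hj hja => by have := hF j hj a ha hja; omega
    simp [hnone, hφ]

theorem measureReal_biInter_compl_le_exp_sameBlockOverlap [IsProbabilityMeasure P]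
    (hA : ∀ k ∈ Icc 1 N, MeasurableSet (A k)) (hmix : RestrictedPhiMixing P A N L φ)
    (hφ : 0 ≤ φ) (hL : 0 < L) (hs : s < L) :
    P.real (⋂ k ∈ Icc 1 N, (A k)ᶜ) ≤ exp ((numBlocks N L * φ - ∑ k ∈ Icc 1 N, P.real (A k)
      + sameBlockOverlap P A N L s) / 2) := by
  have hsub : ∀ F : Finset ℕ,
      ⋂ k ∈ Icc 1 N, (A k)ᶜ ⊆ ⋂ j ∈ F, (⋃ k ∈ shiftedBlock N L s j, A k)ᶜ := by
    intro F ω hω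
    simp only [Set.mem_iInter, Set.mem_compl_iff, Set.mem_iUnion, not_exists] at hω ⊢
    exact fun j _ k hk => hω k (shiftedBlock_subset j hk)
  have hclass (p : ℕ → Prop) [DecidablePred p] (hp : ∀ j a, p j → p a → j < a → j + 2 ≤ a) :=
    (measureReal_mono (hsub _)).trans (measureReal_biInter_compl_shiftedBlock_le hA hmix hφ hs
      (F := {j ∈ range (numBlocks N L) | p j})
      fun j hj a ha => hp j a (mem_filter.1 hj).2 (mem_filter.1 ha).2)
  have hsplit := le_exp_half_sum_of_le_exp_filter (· % 2 = 0)
    (hclass (· % 2 = 0) fun j a hj ha _ => by omega)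
    (hclass (¬· % 2 = 0) fun j a hj ha _ => by omega)
  have hblocks : ∑ j ∈ range (numBlocks N L), ∑ k ∈ shiftedBlock N L s j, P.real (A k) =
      ∑ k ∈ Icc 1 N, P.real (A k) :=
    sum_fiberwise_of_maps_to (fun k hk => div_mem_range_numBlocks hL hs hk) _
  refine hsplit.trans (exp_le_exp.2 (div_le_div_of_nonneg_right ?_ zero_le_two))
  have hbon := fun j => sum_measureReal_sub_pairOverlap_le P (A := A) (F := shiftedBlock N L s j)
    fun k hk => hA k (shiftedBlock_subset j hk)
  calc ∑ j ∈ range (numBlocks N L), (φ - P.real (⋃ k ∈ shiftedBlock N L s j, A k))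
      ≤ ∑ j ∈ range (numBlocks N L), (φ - (∑ k ∈ shiftedBlock N L s j, P.real (A k)
          - pairOverlap P A (shiftedBlock N L s j))) :=
        sum_le_sum fun j _ => by linarith [hbon j]
    _ = _ := by
        rw [sum_sub_distrib, sum_sub_distrib, hblocks, sum_const, card_range, nsmul_eq_mul,
          sameBlockOverlap]
        ring

theorem sameBlockOverlap_eq (hL : 0 < L) (hs : s < L) :
    sameBlockOverlap P A N L s = ∑ i ∈ Icc 1 N,
      ∑ k ∈ Icc 1 N with (k + s - 1) / L = (i + s - 1) / L,
        if i < k then P.real (A i ∩ A k) else 0 := by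
  rw [sameBlockOverlap, ← sum_fiberwise_sum_fiberwise_of_maps_to
    (fun k hk => div_mem_range_numBlocks hL hs hk)]
  exact sum_congr rfl fun j _ => sum_congr rfl fun i _ => sum_filter _ _

theorem mul_weightedOverlap_eq (hL : 0 < L) :
    L * weightedOverlap P A N L = ∑ i ∈ Icc 1 N, ∑ k ∈ Icc 1 N,
      if i < k then ((L - (k - i) : ℕ) : ℝ) * P.real (A i ∩ A k) else 0 := by
  rw [weightedOverlap, sum_filter, sum_product, mul_sum]
  refine sum_congr rfl fun i _ => ?_
  rw [mul_sum]
  refine sum_congr rfl fun k _ => ?_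
  by_cases hik : i < k
  · by_cases hd : k - i ≤ L - 1
    · rw [if_pos ⟨hik, hd⟩, if_pos hik]
      field_simp
    · rw [if_neg fun h => hd h.2, if_pos hik, Nat.sub_eq_zero_of_le (by omega)]
      simp
  · rw [if_neg fun h => hik h.1, if_neg hik, mul_zero]

theorem sum_sameBlockOverlap_le (hL : 0 < L) :
    ∑ s ∈ range L, sameBlockOverlap P A N L s ≤ L * weightedOverlap P A N L := by
  rw [mul_weightedOverlap_eq hL, sum_congr rfl fun s hs => sameBlockOverlap_eq hL (mem_range.1 hs)]
  simp_rw [sum_filter]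
  rw [sum_comm]
  refine sum_le_sum fun i hi => ?_
  rw [sum_comm]
  refine sum_le_sum fun k _ => ?_
  rw [← sum_filter, sum_const, nsmul_eq_mul]
  split_ifs with hik
  · have hcard := card_shifts_same_block_le hL (mem_Icc.1 hi).1 hik.le
    exact mul_le_mul_of_nonneg_right (by exact_mod_cast hcard) measureReal_nonneg
  · simp

theorem measureReal_biInter_compl_le_exp [IsProbabilityMeasure P]
    (hA : ∀ k ∈ Icc 1 N, MeasurableSet (A k)) (hmix : RestrictedPhiMixing P A N L φ)
    (hφ : 0 ≤ φ) (hL : 0 < L) :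
    P.real (⋂ k ∈ Icc 1 N, (A k)ᶜ) ≤ exp (-(1 / 2) * (∑ k ∈ Icc 1 N, P.real (A k)
      - weightedOverlap P A N L - numBlocks N L * φ)) := by
  obtain ⟨s, hs, hW⟩ : ∃ s ∈ range L, sameBlockOverlap P A N L s ≤ weightedOverlap P A N L := by
    refine exists_le_of_sum_le (nonempty_range_iff.2 hL.ne') ?_
    rw [sum_const, card_range, nsmul_eq_mul]
    exact sum_sameBlockOverlap_le hL
  refine (measureReal_biInter_compl_le_exp_sameBlockOverlap hA hmix hφ hL (mem_range.1 hs)).trans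
    (exp_le_exp.2 ?_)
  linarith

end PhiMixing

theorem second_order_phi_mixing_bound_weighted_general
    {Ω : Type*} [MeasurableSpace Ω] (P : Measure Ω) [IsProbabilityMeasure P]
    (N : ℕ)
    (A : ℕ → Set Ω) (hA : ∀ k ∈ Finset.Icc 1 N, MeasurableSet (A k))
    (L : ℕ) (hL : 2 ≤ L) (φs : ℝ) (hφs : 0 ≤ φs)
    (hmix : ∀ k, 1 ≤ k → k + L + 1 ≤ N →
      ∀ C : Set Ω,
        MeasurableSet[MeasurableSpace.generateFrom (A '' Set.Icc 1 k)] C → 0 < P C →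
      ∀ B : Set Ω,
        MeasurableSet[MeasurableSpace.generateFrom (A '' Set.Icc (k + L + 1) N)] B →
          |(P (B ∩ C)).toReal / (P C).toReal - (P B).toReal| ≤ φs) :
    1 - Real.exp (-(1 / 2) *
        max ((∑ k ∈ Finset.Icc 1 N, (P (A k)).toReal)
          - (∑ p ∈ (Finset.Icc 1 N ×ˢ Finset.Icc 1 N).filter
              (fun p => p.1 < p.2 ∧ p.2 - p.1 ≤ L - 1),
              (((L - (p.2 - p.1) : ℕ) : ℝ) / (L : ℝ)) * (P (A p.1 ∩ A p.2)).toReal)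
          - ((⌈(N : ℝ) / (L : ℝ)⌉₊ : ℝ) + 1) * φs) 0) ≤
      (P (⋃ k ∈ Finset.Icc 1 N, A k)).toReal := by
  have hbound := PhiMixing.measureReal_biInter_compl_le_exp hA hmix hφs (by omega)
  rw [← Set.compl_iUnion₂, measureReal_compl ((Icc 1 N).measurableSet_biUnion hA),
    probReal_univ, PhiMixing.numBlocks, Nat.cast_add_one] at hbound
  rw [sub_le_comm]
  exact le_exp_mul_max_zero (sub_le_self 1 measureReal_nonneg) hbound

/-- Remark (weighted local-overlap variant of the second-order φ-mixing inequality):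
with `T^w_{L−1} = ∑_{1≤i<k≤N, k−i≤L−1} ((L − (k−i))/L)·P(A i ∩ A k)` and
`κ_{N,L} = ⌈N/L⌉ + 1`,
`P(⋃ₖ A k) ≥ 1 − exp(−(1/2)(S_N − T^w_{L−1} − κ_{N,L}·φs)₊)`. -/
theorem second_order_phi_mixing_bound_weighted
    {Ω : Type*} [MeasurableSpace Ω] (P : Measure Ω) [IsProbabilityMeasure P]
    (N : ℕ) (hN : 1 ≤ N)
    (A : ℕ → Set Ω) (hA : ∀ k ∈ Finset.Icc 1 N, MeasurableSet (A k))
    (L : ℕ) (hL : 2 ≤ L) (φs : ℝ) (hφs : 0 ≤ φs)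
    (hmix : ∀ k, 1 ≤ k → k + L + 1 ≤ N →
      ∀ C : Set Ω,
        MeasurableSet[MeasurableSpace.generateFrom (A '' Set.Icc 1 k)] C → 0 < P C →
      ∀ B : Set Ω,
        MeasurableSet[MeasurableSpace.generateFrom (A '' Set.Icc (k + L + 1) N)] B →
          |(P (B ∩ C)).toReal / (P C).toReal - (P B).toReal| ≤ φs) :
    1 - Real.exp (-(1 / 2) *
        max ((∑ k ∈ Finset.Icc 1 N, (P (A k)).toReal)
          - (∑ p ∈ (Finset.Icc 1 N ×ˢ Finset.Icc 1 N).filter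
              (fun p => p.1 < p.2 ∧ p.2 - p.1 ≤ L - 1),
              (((L - (p.2 - p.1) : ℕ) : ℝ) / (L : ℝ)) * (P (A p.1 ∩ A p.2)).toReal)
          - ((⌈(N : ℝ) / (L : ℝ)⌉₊ : ℝ) + 1) * φs) 0) ≤
      (P (⋃ k ∈ Finset.Icc 1 N, A k)).toReal :=
  second_order_phi_mixing_bound_weighted_general P N A hA L hL φs hφs hmix
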